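/- Let n be a natural number and let j be a real number with 0 ≤ j < n. Then f_n^j(x) = Σ_{k=1}^{2^n} s_k · (x + k)^j is O(x^{j−n}) as x → ∞; that is, there exist constants C > 0 and X₀ such that |f_n^j(x)| ≤ C · x^{j−n} for all x ≥ X₀. Here s_k = (−1)^{ν(k−1)} and ν(m) denotes the number of ones in the binary expansion of m. -/

import Mathlib

/-!
Splitting `1, …, 2^(n+1)` into two halves and using `s (k + 2^n) = -s k` for `k ≤ 2^n` gives
`f_{n+1}^j(x) = f_n^j(x) - f_n^j(x + 2^n)`. As `(f_n^j)' = j f_n^{j-1}`, the mean value theorem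
turns `f_n^{j-1} = O(x^{j-1-n})` into `f_{n+1}^j = O(x^{j-(n+1)})`. Induction on `n`, for all real
`j` at once, starts from `f_0^j(x) = (x+1)^j = O(x^j)`.
-/

/-- Thue–Morse sign: `s k = (-1)^(number of ones in binary expansion of k-1)`. -/
def tmSign (k : ℕ) : ℝ := (-1 : ℝ) ^ ((Nat.digits 2 (k - 1)).sum)

open Finset Filter Asymptotics

theorem Nat.digits_sum_add_base_pow_mul {b n r m : ℕ} (hb : 1 < b) (hm : 0 < m)
    (hr : r < b ^ n) :
    (b.digits (r + b ^ n * m)).sum = (b.digits r).sum + (b.digits m).sum := by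
  have hlen := (Nat.digits_length_le_iff hb r).2 hr
  have := Nat.digits_append_zeroes_append_digits (k := n - (b.digits r).length) (n := r) hb hm
  rw [Nat.add_sub_cancel' hlen] at this
  simp [← this]

theorem tmSign_add_two_pow {n k : ℕ} (hk : k ∈ Ioc 0 (2 ^ n)) :
    tmSign (k + 2 ^ n) = -tmSign k := by
  obtain ⟨hk0, hkn⟩ := mem_Ioc.1 hk
  have hdigits := Nat.digits_sum_add_base_pow_mul one_lt_two one_pos (show k - 1 < 2 ^ n by omega)
  rw [mul_one] at hdigits
  rw [tmSign, tmSign, show k + 2 ^ n - 1 = k - 1 + 2 ^ n by omega, hdigits]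
  simp [pow_succ]

noncomputable def thueMorseSum (n : ℕ) (j x : ℝ) : ℝ :=
  ∑ k ∈ Icc 1 (2 ^ n), tmSign k * (x + k) ^ j

theorem thueMorseSum_succ (n : ℕ) (j x : ℝ) :
    thueMorseSum (n + 1) j x = thueMorseSum n j x - thueMorseSum n j (x + 2 ^ n) := by
  have hshift : ∑ k ∈ Ioc (2 ^ n) (2 ^ n + 2 ^ n), tmSign k * (x + k) ^ j
      = -∑ k ∈ Ioc 0 (2 ^ n), tmSign k * (x + 2 ^ n + k) ^ j := by
    have hIoc : Ioc (2 ^ n) (2 ^ n + 2 ^ n) = (Ioc 0 (2 ^ n)).map (addRightEmbedding (2 ^ n)) := by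
      simp
    rw [hIoc, sum_map, ← sum_neg_distrib]
    refine sum_congr rfl fun k hk => ?_
    simp only [addRightEmbedding_apply, tmSign_add_two_pow hk]
    push_cast
    ring_nf
  have hIcc (m : ℕ) : Icc 1 m = Ioc 0 m := Icc_succ_left_eq_Ioc 0 m
  simp only [thueMorseSum, hIcc, pow_succ, mul_two]
  rw [← sum_Ioc_consecutive _ (Nat.zero_le _) (Nat.le_add_right _ _), hshift, sub_eq_add_neg]

theorem hasDerivAt_thueMorseSum (n : ℕ) (j : ℝ) {y : ℝ} (hy : -1 < y) :
    HasDerivAt (thueMorseSum n j) (j * thueMorseSum n (j - 1) y) y := by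
  have hterm (k : ℕ) (hk : k ∈ Icc 1 (2 ^ n)) :
      HasDerivAt (fun x => tmSign k * (x + k) ^ j) (tmSign k * (1 * j * (y + k) ^ (j - 1))) y := by
    have hk1 : (1 : ℝ) ≤ k := by exact_mod_cast (mem_Icc.1 hk).1
    exact (((hasDerivAt_id' y).add_const (k : ℝ)).rpow_const (Or.inl (by linarith))).const_mul _
  refine (HasDerivAt.fun_sum hterm).congr_deriv ?_
  rw [thueMorseSum, mul_sum]
  exact sum_congr rfl fun k _ => by ring

theorem Real.rpow_le_max_one_mul_rpow {x c b : ℝ} (e : ℝ) (hx : 0 < x) (hxc : x ≤ c)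
    (hcb : c ≤ b * x) : c ^ e ≤ max 1 (b ^ e) * x ^ e := by
  rcases le_total e 0 with he | he
  · calc c ^ e ≤ x ^ e := Real.rpow_le_rpow_of_nonpos hx hxc he
      _ ≤ max 1 (b ^ e) * x ^ e := le_mul_of_one_le_left (by positivity) (le_max_left _ _)
  · have hb : 0 ≤ b := nonneg_of_mul_nonneg_left (hx.le.trans (hxc.trans hcb)) hx
    calc c ^ e ≤ (b * x) ^ e := Real.rpow_le_rpow (hx.le.trans hxc) hcb he
      _ = b ^ e * x ^ e := Real.mul_rpow hb hx.le
      _ ≤ max 1 (b ^ e) * x ^ e := by gcongr; exact le_max_right _ _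

theorem isBigO_comp_add_sub_of_hasDerivAt {g g' : ℝ → ℝ} {a e : ℝ} (ha : 0 ≤ a)
    (hg : ∀ᶠ y in atTop, HasDerivAt g (g' y) y) (hg' : g' =O[atTop] (· ^ e)) :
    (fun x => g (x + a) - g x) =O[atTop] (· ^ e) := by
  obtain ⟨C, hC, hCg'⟩ := hg'.exists_pos
  obtain ⟨X, hX⟩ := eventually_atTop.1 (hg.and hCg'.bound)
  set M := max 1 ((1 + a) ^ e)
  refine IsBigO.of_bound (C * M * a) ?_
  filter_upwards [eventually_ge_atTop (max X 1)] with x hx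
  have hxX : X ≤ x := le_of_max_le_left hx
  have hx1 : 1 ≤ x := le_of_max_le_right hx
  have hx0 : 0 < x := zero_lt_one.trans_le hx1
  have hg'_le : ∀ c ∈ Set.Icc x (x + a), ‖g' c‖ ≤ C * M * x ^ e := by
    rintro c ⟨hxc, hca⟩
    have hc : c ≤ (1 + a) * x := by nlinarith
    calc ‖g' c‖ ≤ C * ‖c ^ e‖ := (hX c (hxX.trans hxc)).2
      _ = C * c ^ e := by rw [Real.norm_of_nonneg (Real.rpow_pos_of_pos (hx0.trans_le hxc) e).le]
      _ ≤ C * (M * x ^ e) := by gcongr; exact Real.rpow_le_max_one_mul_rpow e hx0 hxc hc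
      _ = C * M * x ^ e := by ring
  have hmvt := (convex_Icc x (x + a)).norm_image_sub_le_of_norm_hasDerivWithin_le
    (fun c hc => ((hX c (hxX.trans hc.1)).1).hasDerivWithinAt) hg'_le
    (Set.left_mem_Icc.2 (by linarith)) (Set.right_mem_Icc.2 (by linarith))
  rw [add_sub_cancel_left, Real.norm_of_nonneg ha] at hmvt
  rw [Real.norm_of_nonneg (Real.rpow_pos_of_pos hx0 e).le]
  calc _ ≤ C * M * x ^ e * a := hmvt
    _ = C * M * a * x ^ e := by ring

theorem isBigO_thueMorseSum (n : ℕ) (j : ℝ) : thueMorseSum n j =O[atTop] (· ^ (j - n)) := by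
  induction n generalizing j with
  | zero =>
    refine IsBigO.of_bound (max 1 (2 ^ j)) ?_
    filter_upwards [eventually_ge_atTop 1] with x hx
    have hx0 : 0 < x := zero_lt_one.trans_le hx
    have hsum : thueMorseSum 0 j x = (x + 1) ^ j := by simp [thueMorseSum, tmSign]
    rw [hsum, Nat.cast_zero, sub_zero, Real.norm_of_nonneg (by positivity),
      Real.norm_of_nonneg (Real.rpow_pos_of_pos hx0 j).le]
    exact Real.rpow_le_max_one_mul_rpow (b := 2) j hx0 (by linarith) (by linarith)
  | succ n ih =>
    have hderiv : ∀ᶠ y in atTop, HasDerivAt (thueMorseSum n j) (j * thueMorseSum n (j - 1) y) y :=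
      (eventually_gt_atTop (-1)).mono fun y hy => hasDerivAt_thueMorseSum n j hy
    have hdiff := isBigO_comp_add_sub_of_hasDerivAt (a := 2 ^ n) (by positivity) hderiv
      ((ih (j - 1)).const_mul_left j)
    have hexp : j - 1 - (n : ℝ) = j - ↑(n + 1) := by push_cast; ring
    rw [← hexp]
    refine (isBigO_neg_left.2 hdiff).congr_left fun x => ?_
    rw [thueMorseSum_succ, neg_sub]

theorem stmt4_general (n : ℕ) (j : ℝ) :
    ∃ C : ℝ, 0 < C ∧ ∃ X₀ : ℝ, ∀ x : ℝ, X₀ ≤ x →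
      |∑ k ∈ Finset.Icc 1 (2 ^ n), tmSign k * (x + k) ^ j| ≤ C * x ^ (j - n) := by
  obtain ⟨C, hC, hbound⟩ := (isBigO_thueMorseSum n j).exists_pos
  obtain ⟨X₀, hX₀⟩ := eventually_atTop.1 (hbound.bound.and (eventually_gt_atTop 0))
  refine ⟨C, hC, X₀, fun x hx => ?_⟩
  obtain ⟨hle, hx0⟩ := hX₀ x hx
  rwa [Real.norm_eq_abs, Real.norm_of_nonneg (Real.rpow_pos_of_pos hx0 _).le] at hle

theorem stmt4 (n : ℕ) (j : ℝ) (hj0 : 0 ≤ j) (hjn : j < n) :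
    ∃ C : ℝ, 0 < C ∧ ∃ X₀ : ℝ, ∀ x : ℝ, X₀ ≤ x →
      |∑ k ∈ Finset.Icc 1 (2 ^ n), tmSign k * (x + k) ^ j| ≤ C * x ^ (j - n) :=
  stmt4_general n j
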